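/- Let f : [a,b] → (0,∞) be continuous and of bounded variation, let g : [a,b] → [0,∞) be of bounded variation with g(a) = 0, and let μ be the finite positive Borel measure on [a,b] with density f^{−1} with respect to the variation measure ν of f (so ν([c,d)) = V_c^d f for a ≤ c < d ≤ b). If ∫_a^y f(x) dg(x) ≤ 0 for all y ∈ (a,b], then f(y) g(y) ≤ ∫_{[a,y)} f(x) g(x) μ(dx) for all y ∈ (a,b], and consequently g(x) = 0 for all x ∈ [a,b]. -/

import Mathlib

/-!
For monotone `g`, write `g = g(·+) - j`: Riemann–Stieltjes sums against the right-continuous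
`g(·+)` approximate the integral of `f` for its Stieltjes measure, and Abel summation makes the
sums against the jump part `j ≥ 0` converge to `f b * j b - f a * j a`, because the jumps of `g`
at the partition points add up to at most the total increase. A Jordan decomposition then gives
`∫_a^y f dg` for `g` of bounded variation.

Summation by parts along uniform partitions with left tags turns `f y * g y - ∫_a^y f dg` into
limits of `∑ g(tᵢ₊₁) (f(tᵢ₊₁) - f(tᵢ)) ≤ ∑ g(tᵢ₊₁) ν[tᵢ, tᵢ₊₁)`, the `ν`-integrals of the
right-endpoint step functions of `g`. Since `f` is continuous, `ν` has no atoms in `[a, b)`, while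
`g` is right-continuous off a countable set, so dominated convergence bounds the limit by
`∫_{[a,y)} g dν = ∫_{[a,y)} f g dμ`.

For the Grönwall step no atomlessness is needed: if `u = f g` vanishes on `[a, c]` and
`μ (c, d) < 1`, then `F = ∫_{(c,d)} u dμ` satisfies `F ≤ F μ (c, d)`, so `F = 0` and `u` vanishes
on `[a, d]`; hence `u` has no first nonzero point.
-/

open Set Filter MeasureTheory

/-- The Riemann–Stieltjes sum of `f` with respect to `g` for the tagged partition with
points `t 0, …, t m` and tags `ξ 0, …, ξ (m-1)`. -/
noncomputable def RSSum (f g : ℝ → ℝ) (m : ℕ) (t ξ : ℕ → ℝ) : ℝ :=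
  ∑ i ∈ Finset.range m, f (ξ i) * (g (t (i + 1)) - g (t i))

/-- `t`, `ξ` form a tagged partition of `[a, b]` into `m` subintervals. -/
def IsTaggedPartition (a b : ℝ) (m : ℕ) (t ξ : ℕ → ℝ) : Prop :=
  0 < m ∧ t 0 = a ∧ t m = b ∧ (∀ i < m, t i < t (i + 1)) ∧
    ∀ i < m, ξ i ∈ Set.Icc (t i) (t (i + 1))

/-- `I` is the Riemann–Stieltjes integral `∫_a^b f dg`: the Riemann–Stieltjes sums tend to `I`
as the mesh of the tagged partition tends to zero. -/
def HasRSIntegral (f g : ℝ → ℝ) (a b : ℝ) (I : ℝ) : Prop :=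
  ∀ ε > 0, ∃ δ > 0, ∀ (m : ℕ) (t ξ : ℕ → ℝ), IsTaggedPartition a b m t ξ →
    (∀ i < m, t (i + 1) - t i < δ) → |RSSum f g m t ξ - I| < ε

open Classical in
/-- The Riemann–Stieltjes integral `∫_a^b f dg`, defaulting to `0` if it does not exist. -/
noncomputable def RSIntegral (f g : ℝ → ℝ) (a b : ℝ) : ℝ :=
  if h : ∃ I, HasRSIntegral f g a b I then h.choose else 0

open scoped Topology

namespace IsTaggedPartition

variable {a b : ℝ} {m : ℕ} {t ξ : ℕ → ℝ}

lemma first_eq (h : IsTaggedPartition a b m t ξ) : t 0 = a := h.2.1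

lemma last_eq (h : IsTaggedPartition a b m t ξ) : t m = b := h.2.2.1

lemma lt_succ (h : IsTaggedPartition a b m t ξ) {i : ℕ} (hi : i < m) : t i < t (i + 1) :=
  h.2.2.2.1 i hi

lemma tag_mem (h : IsTaggedPartition a b m t ξ) {i : ℕ} (hi : i < m) :
    ξ i ∈ Icc (t i) (t (i + 1)) :=
  h.2.2.2.2 i hi

lemma strictMonoOn (h : IsTaggedPartition a b m t ξ) : StrictMonoOn t (Iic m) :=
  strictMonoOn_Iic_of_lt_succ fun _ hi => h.lt_succ hi

lemma left_lt_right (h : IsTaggedPartition a b m t ξ) : a < b :=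
  h.first_eq ▸ h.last_eq ▸ h.strictMonoOn (Nat.zero_le m) (mem_Iic.2 le_rfl) h.1

lemma mem_Icc (h : IsTaggedPartition a b m t ξ) {i : ℕ} (hi : i ≤ m) : t i ∈ Icc a b := by
  have hmono := h.strictMonoOn.monotoneOn
  exact ⟨h.first_eq ▸ hmono (Nat.zero_le m) hi (Nat.zero_le i),
    h.last_eq ▸ hmono hi (mem_Iic.2 le_rfl) hi⟩

lemma tag_mem_Icc (h : IsTaggedPartition a b m t ξ) {i : ℕ} (hi : i < m) : ξ i ∈ Icc a b :=
  Icc_subset_Icc (h.mem_Icc hi.le).1 (h.mem_Icc hi).2 (h.tag_mem hi)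

lemma RSSum_congr {f₁ f₂ g₁ g₂ : ℝ → ℝ} (h : IsTaggedPartition a b m t ξ)
    (hf : EqOn f₁ f₂ (Icc a b)) (hg : EqOn g₁ g₂ (Icc a b)) :
    RSSum f₁ g₁ m t ξ = RSSum f₂ g₂ m t ξ :=
  Finset.sum_congr rfl fun i hi => by
    have hi := Finset.mem_range.1 hi
    rw [hf (h.tag_mem_Icc hi), hg (h.mem_Icc hi), hg (h.mem_Icc hi.le)]

end IsTaggedPartition

lemma RSSum_sub (f g₁ g₂ : ℝ → ℝ) (m : ℕ) (t ξ : ℕ → ℝ) :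
    RSSum f (g₁ - g₂) m t ξ = RSSum f g₁ m t ξ - RSSum f g₂ m t ξ := by
  simp only [RSSum, ← Finset.sum_sub_distrib, Pi.sub_apply]
  exact Finset.sum_congr rfl fun i _ => by ring

namespace HasRSIntegral

variable {f g g₁ g₂ : ℝ → ℝ} {a b I I₁ I₂ : ℝ}

lemma congr {f' g' : ℝ → ℝ} (h : HasRSIntegral f g a b I) (hf : EqOn f f' (Icc a b))
    (hg : EqOn g g' (Icc a b)) : HasRSIntegral f' g' a b I := by
  intro ε hε
  obtain ⟨δ, hδ, H⟩ := h ε hε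
  exact ⟨δ, hδ, fun m t ξ htp hmesh => htp.RSSum_congr hf hg ▸ H m t ξ htp hmesh⟩

lemma sub (h₁ : HasRSIntegral f g₁ a b I₁) (h₂ : HasRSIntegral f g₂ a b I₂) :
    HasRSIntegral f (g₁ - g₂) a b (I₁ - I₂) := by
  intro ε hε
  obtain ⟨δ₁, hδ₁, H₁⟩ := h₁ (ε / 2) (half_pos hε)
  obtain ⟨δ₂, hδ₂, H₂⟩ := h₂ (ε / 2) (half_pos hε)
  refine ⟨min δ₁ δ₂, lt_min hδ₁ hδ₂, fun m t ξ htp hmesh => ?_⟩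
  have e₁ := H₁ m t ξ htp fun i hi => (hmesh i hi).trans_le (min_le_left _ _)
  have e₂ := H₂ m t ξ htp fun i hi => (hmesh i hi).trans_le (min_le_right _ _)
  rw [RSSum_sub]
  calc |RSSum f g₁ m t ξ - RSSum f g₂ m t ξ - (I₁ - I₂)|
      = |(RSSum f g₁ m t ξ - I₁) - (RSSum f g₂ m t ξ - I₂)| := by ring_nf
    _ ≤ |RSSum f g₁ m t ξ - I₁| + |RSSum f g₂ m t ξ - I₂| := abs_sub _ _
    _ < ε := by linarith

end HasRSIntegral

noncomputable def uniformPartition (a b : ℝ) (n i : ℕ) : ℝ := a + i * ((b - a) / n)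

lemma uniformPartition_succ_sub (a b : ℝ) (n i : ℕ) :
    uniformPartition a b n (i + 1) - uniformPartition a b n i = (b - a) / n := by
  simp only [uniformPartition, Nat.cast_succ]; ring

lemma isTaggedPartition_uniformPartition {a b : ℝ} (hab : a < b) {n : ℕ} (hn : 0 < n) :
    IsTaggedPartition a b n (uniformPartition a b n) (uniformPartition a b n) := by
  have hstep : 0 < (b - a) / n := div_pos (sub_pos.2 hab) (Nat.cast_pos.2 hn)
  refine ⟨hn, by simp [uniformPartition], ?_, fun i _ => ?_, fun i _ => ⟨le_rfl, ?_⟩⟩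
  · simp only [uniformPartition]
    field_simp
    ring
  all_goals linarith [uniformPartition_succ_sub a b n i]

lemma HasRSIntegral.tendsto_uniformPartition {f g : ℝ → ℝ} {a b I : ℝ} (hab : a < b)
    (h : HasRSIntegral f g a b I) :
    Tendsto (fun n => RSSum f g n (uniformPartition a b n) (uniformPartition a b n)) atTop
      (𝓝 I) := by
  rw [Metric.tendsto_nhds]
  intro ε hε
  obtain ⟨δ, hδ, H⟩ := h ε hε
  filter_upwards [eventually_gt_atTop 0,
    (tendsto_const_div_atTop_nhds_zero_nat (b - a)).eventually (gt_mem_nhds hδ)] with n hn hmesh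
  exact H n _ _ (isTaggedPartition_uniformPartition hab hn) fun i _ => by
    rwa [uniformPartition_succ_sub]

lemma HasRSIntegral.unique {f g : ℝ → ℝ} {a b I I' : ℝ} (hab : a < b)
    (h : HasRSIntegral f g a b I) (h' : HasRSIntegral f g a b I') : I = I' :=
  tendsto_nhds_unique (h.tendsto_uniformPartition hab) (h'.tendsto_uniformPartition hab)

lemma HasRSIntegral.RSIntegral_eq {f g : ℝ → ℝ} {a b I : ℝ} (hab : a < b)
    (h : HasRSIntegral f g a b I) : RSIntegral f g a b = I := by
  have hex : ∃ I, HasRSIntegral f g a b I := ⟨I, h⟩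
  rw [RSIntegral, dif_pos hex]
  exact hex.choose_spec.unique hab h

lemma ContinuousOn.exists_pos_forall_abs_tag_sub_le {f : ℝ → ℝ} {a b ε : ℝ}
    (hf : ContinuousOn f (Icc a b)) (hε : 0 < ε) :
    ∃ δ > 0, ∀ m t ξ, IsTaggedPartition a b m t ξ → (∀ i < m, t (i + 1) - t i < δ) →
      ∀ i < m, ∀ x ∈ Icc (t i) (t (i + 1)), |f (ξ i) - f x| ≤ ε := by
  obtain ⟨δ, hδ, hfδ⟩ := Metric.uniformContinuousOn_iff_le.1
    (isCompact_Icc.uniformContinuousOn_of_continuous hf) ε hε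
  refine ⟨δ, hδ, fun m t ξ htp hmesh i hi x hx => ?_⟩
  have hξ := htp.tag_mem hi
  refine hfδ _ (htp.tag_mem_Icc hi) _
    (Icc_subset_Icc (htp.mem_Icc hi.le).1 (htp.mem_Icc hi).2 hx) ?_
  rw [Real.dist_eq, abs_sub_le_iff]
  constructor <;> linarith [hmesh i hi, hξ.1, hξ.2, hx.1, hx.2]

namespace StieltjesFunction

variable (σ : StieltjesFunction ℝ)

lemma measureReal_Ioc {u v : ℝ} (huv : u ≤ v) : σ.measure.real (Ioc u v) = σ v - σ u := by
  rw [measureReal_def, σ.measure_Ioc, ENNReal.toReal_ofReal (sub_nonneg.2 (σ.mono huv))]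

lemma abs_mul_sub_intervalIntegral_le {f : ℝ → ℝ} {u v c ε : ℝ} (huv : u ≤ v)
    (hf : IntervalIntegrable f σ.measure u v) (hc : ∀ x ∈ Ioc u v, |c - f x| ≤ ε) :
    |c * (σ v - σ u) - ∫ x in u..v, f x ∂σ.measure| ≤ ε * (σ v - σ u) := by
  have hfin : σ.measure (Ioc u v) < ⊤ := by rw [σ.measure_Ioc]; exact ENNReal.ofReal_lt_top
  rw [intervalIntegral.integral_of_le huv, ← σ.measureReal_Ioc huv, mul_comm c, ← smul_eq_mul,
    ← setIntegral_const,
    ← integral_sub (integrableOn_const hfin.ne : IntegrableOn (fun _ => c) _ _) hf.1]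
  exact norm_setIntegral_le_of_norm_le_const (f := fun x => c - f x) hfin hc

lemma abs_RSSum_sub_intervalIntegral_le {f : ℝ → ℝ} {a b ε : ℝ} {m : ℕ} {t ξ : ℕ → ℝ}
    (htp : IsTaggedPartition a b m t ξ) (hf : ContinuousOn f (Icc a b))
    (hosc : ∀ i < m, ∀ x ∈ Icc (t i) (t (i + 1)), |f (ξ i) - f x| ≤ ε) :
    |RSSum f σ m t ξ - ∫ x in a..b, f x ∂σ.measure| ≤ ε * (σ b - σ a) := by
  have hle : ∀ i < m, t i ≤ t (i + 1) := fun i hi => (htp.lt_succ hi).le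
  have hint : ∀ i < m, IntervalIntegrable f σ.measure (t i) (t (i + 1)) := fun i hi =>
    (hf.mono (by rw [uIcc_of_le (hle i hi)]
                 exact Icc_subset_Icc (htp.mem_Icc hi.le).1 (htp.mem_Icc hi).2)).intervalIntegrable
  have hsplit := intervalIntegral.sum_integral_adjacent_intervals hint
  rw [htp.first_eq, htp.last_eq] at hsplit
  have htel := Finset.sum_range_sub (fun i => σ (t i)) m
  rw [htp.first_eq, htp.last_eq] at htel
  rw [← hsplit, ← htel, Finset.mul_sum, RSSum, ← Finset.sum_sub_distrib]
  refine (Finset.abs_sum_le_sum_abs _ _).trans (Finset.sum_le_sum fun i hi => ?_)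
  have hi := Finset.mem_range.1 hi
  exact σ.abs_mul_sub_intervalIntegral_le (hle i hi) (hint i hi)
    fun x hx => hosc i hi x (Ioc_subset_Icc_self hx)

end StieltjesFunction

lemma abs_RSSum_sub_boundary_le {f j : ℝ → ℝ} {m : ℕ} {t ξ : ℕ → ℝ} {ε : ℝ} (hε : 0 ≤ ε)
    (hj : ∀ i ≤ m, 0 ≤ j (t i))
    (hosc : ∀ i < m, |f (ξ i) - f (t i)| ≤ ε ∧ |f (ξ i) - f (t (i + 1))| ≤ ε) :
    |RSSum f j m t ξ - (f (t m) * j (t m) - f (t 0) * j (t 0))|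
      ≤ 2 * ε * ∑ i ∈ Finset.range (m + 1), j (t i) := by
  rw [← Finset.sum_range_sub (fun i => f (t i) * j (t i)), RSSum, ← Finset.sum_sub_distrib]
  have hterm : ∀ i ∈ Finset.range m,
      |f (ξ i) * (j (t (i + 1)) - j (t i)) - (f (t (i + 1)) * j (t (i + 1)) - f (t i) * j (t i))|
        ≤ ε * j (t (i + 1)) + ε * j (t i) := by
    intro i hi
    have hi := Finset.mem_range.1 hi
    obtain ⟨h₀, h₁⟩ := hosc i hi
    calc _ = |(f (ξ i) - f (t (i + 1))) * j (t (i + 1)) - (f (ξ i) - f (t i)) * j (t i)| := by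
          ring_nf
      _ ≤ |f (ξ i) - f (t (i + 1))| * j (t (i + 1)) + |f (ξ i) - f (t i)| * j (t i) := by
          rw [← abs_of_nonneg (hj (i + 1) hi), ← abs_of_nonneg (hj i hi.le), ← abs_mul, ← abs_mul,
            abs_of_nonneg (hj (i + 1) hi), abs_of_nonneg (hj i hi.le)]
          exact abs_sub _ _
      _ ≤ ε * j (t (i + 1)) + ε * j (t i) := by
          gcongr
          exacts [hj (i + 1) hi, hj i hi.le]
  refine (Finset.abs_sum_le_sum_abs _ _).trans ((Finset.sum_le_sum hterm).trans ?_)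
  have hj' : 0 ≤ j (t 0) ∧ 0 ≤ j (t m) := ⟨hj 0 (Nat.zero_le m), hj m le_rfl⟩
  rw [Finset.sum_add_distrib, ← Finset.mul_sum, ← Finset.mul_sum]
  have e₁ := Finset.sum_range_succ' (fun i => j (t i)) m
  have e₂ := Finset.sum_range_succ (fun i => j (t i)) m
  nlinarith

lemma Monotone.sum_rightLim_sub_le {g : ℝ → ℝ} (hg : Monotone g) {m : ℕ} {t : ℕ → ℝ}
    (ht : ∀ i < m, t i < t (i + 1)) :
    ∑ i ∈ Finset.range (m + 1), (Function.rightLim g (t i) - g (t i))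
      ≤ Function.rightLim g (t m) - g (t 0) := by
  induction m with
  | zero => simp
  | succ m ih =>
    rw [Finset.sum_range_succ]
    have := ih fun i hi => ht i (by omega)
    have := hg.rightLim_le (ht m (by omega))
    linarith

theorem Monotone.exists_hasRSIntegral {f g : ℝ → ℝ} (hg : Monotone g) {a b : ℝ}
    (hf : ContinuousOn f (Icc a b)) : ∃ I, HasRSIntegral f g a b I := by
  set σ := hg.stieltjesFunction
  set j : ℝ → ℝ := fun x => σ x - g x
  have hj : ∀ x, 0 ≤ j x := fun x => sub_nonneg.2 (hg.le_rightLim le_rfl)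
  refine ⟨(∫ x in a..b, f x ∂σ.measure) - (f b * j b - f a * j a), fun ε hε => ?_⟩
  set B := σ b - g a
  set ε' := ε / (3 * B + 1)
  have hB : σ b - σ a ≤ B := by linarith [hj a]
  by_cases hab : a < b
  swap
  · exact ⟨1, one_pos, fun m t ξ htp _ => absurd htp.left_lt_right hab⟩
  have hB0 : 0 ≤ B := by linarith [hj b, hg hab.le]
  have hε' : 0 < ε' := div_pos hε (by linarith)
  obtain ⟨δ, hδ, hδosc⟩ := hf.exists_pos_forall_abs_tag_sub_le hε'
  refine ⟨δ, hδ, fun m t ξ htp hmesh => ?_⟩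
  have hosc := hδosc m t ξ htp hmesh
  have hσ := σ.abs_RSSum_sub_intervalIntegral_le htp hf hosc
  have hjump := abs_RSSum_sub_boundary_le (f := f) (j := j) hε'.le (fun i _ => hj _)
    fun i hi => ⟨hosc i hi _ ⟨le_rfl, (htp.lt_succ hi).le⟩,
      hosc i hi _ ⟨(htp.lt_succ hi).le, le_rfl⟩⟩
  have hsum := hg.sum_rightLim_sub_le (t := t) fun _ hi => htp.lt_succ hi
  rw [htp.first_eq, htp.last_eq] at hjump hsum
  have hsplit : RSSum f g m t ξ = RSSum f σ m t ξ - RSSum f j m t ξ := by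
    rw [← RSSum_sub]
    congr 1
    ext x
    simp [j]
  calc |RSSum f g m t ξ - ((∫ x in a..b, f x ∂σ.measure) - (f b * j b - f a * j a))|
      ≤ |RSSum f σ m t ξ - ∫ x in a..b, f x ∂σ.measure|
        + |RSSum f j m t ξ - (f b * j b - f a * j a)| := by
        rw [hsplit]; exact (abs_sub _ _).trans_eq' (by ring_nf)
    _ ≤ ε' * B + 2 * ε' * B := by
        gcongr
        · exact hσ.trans (mul_le_mul_of_nonneg_left hB hε'.le)
        · exact hjump.trans (mul_le_mul_of_nonneg_left hsum (by positivity))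
    _ < ε := by
        rw [show ε' * B + 2 * ε' * B = ε * (3 * B) / (3 * B + 1) by ring]
        rw [div_lt_iff₀ (by linarith)]
        nlinarith

theorem MonotoneOn.exists_hasRSIntegral {f g : ℝ → ℝ} {a b : ℝ} (hab : a ≤ b)
    (hg : MonotoneOn g (Icc a b)) (hf : ContinuousOn f (Icc a b)) :
    ∃ I, HasRSIntegral f g a b I := by
  have hG : Monotone fun x => g (projIcc a b hab x) := fun x y hxy =>
    hg (projIcc a b hab x).2 (projIcc a b hab y).2 (monotone_projIcc hab hxy)
  obtain ⟨I, hI⟩ := hG.exists_hasRSIntegral hf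
  exact ⟨I, hI.congr (eqOn_refl f _) fun x hx => by simp [projIcc_of_mem hab hx]⟩

theorem BoundedVariationOn.exists_hasRSIntegral {f g : ℝ → ℝ} {a b : ℝ} (hab : a ≤ b)
    (hg : BoundedVariationOn g (Icc a b)) (hf : ContinuousOn f (Icc a b)) :
    ∃ I, HasRSIntegral f g a b I := by
  obtain ⟨p, q, hp, hq, rfl⟩ := hg.locallyBoundedVariationOn.exists_monotoneOn_sub_monotoneOn
  obtain ⟨I₁, h₁⟩ := hp.exists_hasRSIntegral hab hf
  obtain ⟨I₂, h₂⟩ := hq.exists_hasRSIntegral hab hf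
  exact ⟨I₁ - I₂, h₁.sub h₂⟩

def IsVariationMeasureOn (f : ℝ → ℝ) (a b : ℝ) (ν : Measure ℝ) : Prop :=
  ∀ c d : ℝ, a ≤ c → c < d → d ≤ b →
    ν (Ico c d) = ENNReal.ofReal (eVariationOn f (Icc c d)).toReal

namespace IsVariationMeasureOn

variable {f : ℝ → ℝ} {a b : ℝ} {ν : Measure ℝ}

lemma sub_le_measureReal_Ico (hν : IsVariationMeasureOn f a b ν)
    (hbv : BoundedVariationOn f (Icc a b)) {c d : ℝ}
    (hac : a ≤ c) (hcd : c < d) (hdb : d ≤ b) : f d - f c ≤ ν.real (Ico c d) := by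
  rw [measureReal_def, hν c d hac hcd hdb, ENNReal.toReal_ofReal ENNReal.toReal_nonneg]
  exact (hbv.mono (Icc_subset_Icc hac hdb)).sub_le ⟨hcd.le, le_rfl⟩ ⟨le_rfl, hcd.le⟩

lemma measure_singleton_eq_zero (hν : IsVariationMeasureOn f a b ν) (hf : ContinuousOn f (Icc a b))
    (hbv : BoundedVariationOn f (Icc a b)) {x : ℝ} (hx : x ∈ Ico a b) : ν {x} = 0 := by
  have hlim : Tendsto (fun d => eVariationOn f (Icc a b ∩ Icc x d)) (𝓝[Ioo x b] x) (𝓝 0) :=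
    (hbv.tendsto_eVariationOn_Icc_zero_right x
      ((hf x (Ico_subset_Icc_self hx)).mono inter_subset_left)).mono_left
      (nhdsWithin_mono _ (Ioo_subset_Icc_self.trans (Icc_subset_Icc_left hx.1)))
  have := left_nhdsWithin_Ioo_neBot hx.2
  refine nonpos_iff_eq_zero.1 (ge_of_tendsto hlim (eventually_nhdsWithin_of_forall fun d hd => ?_))
  calc ν {x} ≤ ν (Ico x d) := measure_mono (singleton_subset_iff.2 ⟨le_rfl, hd.1⟩)
    _ = ENNReal.ofReal (eVariationOn f (Icc x d)).toReal := hν x d hx.1 hd.1 hd.2.le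
    _ ≤ eVariationOn f (Icc x d) := ENNReal.ofReal_toReal_le
    _ = eVariationOn f (Icc a b ∩ Icc x d) := by
      rw [inter_eq_right.2 (Icc_subset_Icc hx.1 hd.2.le)]

end IsVariationMeasureOn

lemma BoundedVariationOn.abs_le_abs_add {g : ℝ → ℝ} {s : Set ℝ} (hg : BoundedVariationOn g s)
    {x₀ x : ℝ} (hx₀ : x₀ ∈ s) (hx : x ∈ s) : |g x| ≤ |g x₀| + (eVariationOn g s).toReal := by
  have := hg.dist_le hx hx₀
  rw [Real.dist_eq] at this
  linarith [abs_sub_abs_le_abs_sub (g x) (g x₀)]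

lemma BoundedVariationOn.countable_not_continuousWithinAt_Ioi {g : ℝ → ℝ} {s : Set ℝ}
    (hg : BoundedVariationOn g s) :
    {x ∈ s | ¬ContinuousWithinAt g (s ∩ Ioi x) x}.Countable := by
  obtain ⟨p, q, hp, hq, rfl⟩ := hg.locallyBoundedVariationOn.exists_monotoneOn_sub_monotoneOn
  refine (hp.countable_not_continuousWithinAt_Ioi.union
    hq.countable_not_continuousWithinAt_Ioi).mono fun x ⟨hxs, hx⟩ => ?_
  simp only [mem_union, mem_ofPred_eq, hxs, true_and] at hx ⊢
  by_contra! h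
  exact hx (h.1.sub h.2)

lemma IsTaggedPartition.mul_sub_mul_sub_RSSum_le {f g : ℝ → ℝ} {a b : ℝ} {m : ℕ} {t : ℕ → ℝ}
    {ν : Measure ℝ} (htp : IsTaggedPartition a b m t t) (hg : ∀ x ∈ Icc a b, 0 ≤ g x)
    (hf : ∀ c d, a ≤ c → c < d → d ≤ b → f d - f c ≤ ν.real (Ico c d)) :
    f b * g b - f a * g a - RSSum f g m t t
      ≤ ∑ i ∈ Finset.range m, g (t (i + 1)) * ν.real (Ico (t i) (t (i + 1))) := by
  rw [← htp.first_eq, ← htp.last_eq, ← Finset.sum_range_sub (fun i => f (t i) * g (t i)), RSSum,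
    ← Finset.sum_sub_distrib]
  refine Finset.sum_le_sum fun i hi => ?_
  have hi := Finset.mem_range.1 hi
  have hc := htp.mem_Icc hi.le
  have hd := htp.mem_Icc hi
  calc _ = g (t (i + 1)) * (f (t (i + 1)) - f (t i)) := by ring
    _ ≤ _ := mul_le_mul_of_nonneg_left (hf _ _ hc.1 (htp.lt_succ hi) hd.2) (hg _ hd)

noncomputable def rightEndpointStep (g : ℝ → ℝ) (a b : ℝ) (n : ℕ) (x : ℝ) : ℝ :=
  ∑ i ∈ Finset.range n, (Ico (uniformPartition a b n i) (uniformPartition a b n (i + 1))).indicator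
    (fun _ => g (uniformPartition a b n (i + 1))) x

section RightEndpointStep

variable {g : ℝ → ℝ} {a b : ℝ} {n : ℕ}

lemma measurable_rightEndpointStep (g : ℝ → ℝ) (a b : ℝ) (n : ℕ) :
    Measurable (rightEndpointStep g a b n) :=
  Finset.measurable_sum _ fun _ _ => measurable_const.indicator measurableSet_Ico

lemma exists_rightEndpointStep_eq (hab : a < b) (hn : 0 < n) {x : ℝ} (hx : x ∈ Ico a b) :
    ∃ z ∈ Ioc x b, z - x ≤ (b - a) / n ∧ rightEndpointStep g a b n x = g z := by
  set h := (b - a) / n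
  have hh : 0 < h := div_pos (sub_pos.2 hab) (Nat.cast_pos.2 hn)
  have hr : 0 ≤ (x - a) / h := div_nonneg (sub_nonneg.2 hx.1) hh.le
  have hcell : ∀ i, x ∈ Ico (uniformPartition a b n i) (uniformPartition a b n (i + 1)) ↔
      ⌊(x - a) / h⌋₊ = i := by
    intro i
    rw [Nat.floor_eq_iff hr, le_div_iff₀ hh, div_lt_iff₀ hh]
    simp only [uniformPartition, mem_Ico, Nat.cast_succ]
    constructor <;> rintro ⟨h₁, h₂⟩ <;> constructor <;> linarith
  set k := ⌊(x - a) / h⌋₊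
  have hk : k < n := by
    refine (Nat.floor_lt hr).2 ((div_lt_iff₀ hh).2 ?_)
    rw [show (n : ℝ) * h = b - a by simp only [h]; field_simp]
    linarith [hx.2]
  have hxk := (hcell k).2 rfl
  have htp := isTaggedPartition_uniformPartition hab hn
  refine ⟨uniformPartition a b n (k + 1), ⟨hxk.2, (htp.mem_Icc hk).2⟩, ?_, ?_⟩
  · linarith [uniformPartition_succ_sub a b n k, hxk.1]
  · rw [rightEndpointStep, Finset.sum_eq_single_of_mem k (Finset.mem_range.2 hk)
      fun i _ hik => indicator_of_notMem (fun hmem => hik ((hcell i).1 hmem).symm) _]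
    exact indicator_of_mem hxk _

lemma setIntegral_rightEndpointStep {ν : Measure ℝ} [IsLocallyFiniteMeasure ν] (hab : a < b) :
    ∫ x in Ico a b, rightEndpointStep g a b n x ∂ν
      = ∑ i ∈ Finset.range n, g (uniformPartition a b n (i + 1))
          * ν.real (Ico (uniformPartition a b n i) (uniformPartition a b n (i + 1))) := by
  simp only [rightEndpointStep]
  rw [integral_finsetSum _ fun i _ =>
    (integrable_indicator_iff measurableSet_Ico).2 (integrableOn_const measure_Ico_lt_top.ne)]
  refine Finset.sum_congr rfl fun i hi => ?_
  have hi := Finset.mem_range.1 hi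
  have htp := isTaggedPartition_uniformPartition hab (Nat.zero_lt_of_lt hi)
  rw [integral_indicator_const _ measurableSet_Ico, measureReal_restrict_apply measurableSet_Ico,
    inter_eq_left.2 (Ico_subset_Ico (htp.mem_Icc hi.le).1 (htp.mem_Icc hi).2), smul_eq_mul,
    mul_comm]

end RightEndpointStep

lemma tendsto_setIntegral_rightEndpointStep {g : ℝ → ℝ} {a b : ℝ} {ν : Measure ℝ}
    [IsLocallyFiniteMeasure ν] (hab : a < b) (hg : BoundedVariationOn g (Icc a b))
    (hν : ∀ x ∈ Ico a b, ν {x} = 0) :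
    Tendsto (fun n => ∫ x in Ico a b, rightEndpointStep g a b n x ∂ν) atTop
      (𝓝 (∫ x in Ico a b, g x ∂ν)) := by
  have : IsFiniteMeasure (ν.restrict (Ico a b)) :=
    isFiniteMeasure_restrict.2 measure_Ico_lt_top.ne
  set C := |g a| + (eVariationOn g (Icc a b)).toReal
  have hC : ∀ x ∈ Icc a b, |g x| ≤ C := fun x hx =>
    hg.abs_le_abs_add (left_mem_Icc.2 hab.le) hx
  have hcont : ∀ᵐ x ∂ν.restrict (Ico a b), ContinuousWithinAt g (Icc a b ∩ Ioi x) x := by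
    have hnull : ν ({x ∈ Icc a b | ¬ContinuousWithinAt g (Icc a b ∩ Ioi x) x} ∩ Ico a b) = 0 :=
      (measure_null_iff_singleton (hg.countable_not_continuousWithinAt_Ioi.mono
        inter_subset_left)).2 fun x hx => hν x hx.2
    rw [ae_restrict_iff' measurableSet_Ico]
    filter_upwards [measure_eq_zero_iff_ae_notMem.1 hnull] with x hx hxI
    by_contra h
    exact hx ⟨⟨Ico_subset_Icc_self hxI, h⟩, hxI⟩
  refine tendsto_integral_filter_of_dominated_convergence (fun _ => C)
    (Eventually.of_forall fun n => (measurable_rightEndpointStep g a b n).aestronglyMeasurable)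
    ?_ (integrable_const C) ?_
  · filter_upwards [eventually_gt_atTop 0] with n hn
    filter_upwards [ae_restrict_mem measurableSet_Ico] with x hx
    obtain ⟨z, hz, -, hgz⟩ := exists_rightEndpointStep_eq (g := g) hab hn hx
    rw [hgz]
    exact hC z ⟨hx.1.trans hz.1.le, hz.2⟩
  · filter_upwards [ae_restrict_mem measurableSet_Ico, hcont] with x hx hxc
    rw [Metric.continuousWithinAt_iff] at hxc
    rw [Metric.tendsto_nhds]
    intro ε hε
    obtain ⟨δ, hδ, H⟩ := hxc ε hε
    filter_upwards [eventually_gt_atTop 0,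
      (tendsto_const_div_atTop_nhds_zero_nat (b - a)).eventually (gt_mem_nhds hδ)] with n hn hmesh
    obtain ⟨z, hz, hzx, hgz⟩ := exists_rightEndpointStep_eq (g := g) hab hn hx
    rw [hgz]
    refine H ⟨⟨hx.1.trans hz.1.le, hz.2⟩, hz.1⟩ ?_
    rw [Real.dist_eq, abs_of_pos (sub_pos.2 hz.1)]
    linarith

theorem HasRSIntegral.mul_sub_mul_sub_le_setIntegral {f g : ℝ → ℝ} {a b I : ℝ} {ν : Measure ℝ}
    [IsLocallyFiniteMeasure ν] (hab : a < b) (hI : HasRSIntegral f g a b I)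
    (hg : BoundedVariationOn g (Icc a b)) (hg_nonneg : ∀ x ∈ Icc a b, 0 ≤ g x)
    (hν : ∀ x ∈ Ico a b, ν {x} = 0)
    (hf : ∀ c d, a ≤ c → c < d → d ≤ b → f d - f c ≤ ν.real (Ico c d)) :
    f b * g b - f a * g a - I ≤ ∫ x in Ico a b, g x ∂ν := by
  refine le_of_tendsto_of_tendsto (tendsto_const_nhds.sub (hI.tendsto_uniformPartition hab))
    (tendsto_setIntegral_rightEndpointStep hab hg hν) ?_
  filter_upwards [eventually_gt_atTop 0] with n hn
  rw [setIntegral_rightEndpointStep hab]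
  exact (isTaggedPartition_uniformPartition hab hn).mul_sub_mul_sub_RSSum_le hg_nonneg hf

section Gronwall

variable {μ : Measure ℝ} [IsFiniteMeasure μ] {u : ℝ → ℝ} {a b : ℝ}

lemma exists_gt_forall_eq_zero_of_le_setIntegral_Ico (hu_int : IntegrableOn u (Icc a b) μ)
    (hu_nonneg : ∀ x ∈ Icc a b, 0 ≤ u x) (h : ∀ y ∈ Ioc a b, u y ≤ ∫ x in Ico a y, u x ∂μ)
    {c : ℝ} (hac : a ≤ c) (hcb : c < b) (hc : ∀ z ∈ Icc a c, u z = 0) :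
    ∃ d, c < d ∧ d ≤ b ∧ ∀ z ∈ Icc a d, u z = 0 := by
  have hsmall : ∀ᶠ d in 𝓝[>] c, μ (Ioo c d) < 1 := by
    have hlim := tendsto_measure_biInter_gt (μ := μ) (s := fun d => Ioo c d) (a := c)
      (fun _ _ => measurableSet_Ioo.nullMeasurableSet) (fun _ _ _ hij => Ioo_subset_Ioo_right hij)
      ⟨c + 1, by linarith, measure_ne_top _ _⟩
    have hempty : ⋂ r > c, Ioo c r = ∅ := by
      refine eq_empty_of_forall_notMem fun x hx => ?_
      simp only [mem_iInter, mem_Ioo] at hx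
      exact lt_irrefl x (hx x (hx (c + 1) (by linarith)).1).2
    rw [hempty, measure_empty] at hlim
    exact hlim.eventually (gt_mem_nhds zero_lt_one)
  obtain ⟨d, hd1, hcd, hdb⟩ := (hsmall.and (Ioc_mem_nhdsGT hcb)).exists
  have hsub : Icc a c ∪ Ioo c d ⊆ Icc a b :=
    union_subset (Icc_subset_Icc_right hcb.le) fun x hx => ⟨hac.trans hx.1.le, hx.2.le.trans hdb⟩
  set F := ∫ x in Ioo c d, u x ∂μ
  have hle : ∀ x ∈ Ioc c d, u x ≤ F := by
    intro x hx
    calc u x ≤ ∫ z in Ico a x, u z ∂μ := h x ⟨hac.trans_lt hx.1, hx.2.trans hdb⟩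
      _ ≤ ∫ z in Icc a c ∪ Ioo c d, u z ∂μ := by
          refine setIntegral_mono_set (hu_int.mono_set hsub) ?_ (Eventually.of_forall ?_)
          · exact (ae_restrict_iff' (measurableSet_Icc.union measurableSet_Ioo)).2
              (Eventually.of_forall fun z hz => hu_nonneg z (hsub hz))
          · intro z hz
            rcases le_or_gt z c with hzc | hzc
            · exact Or.inl ⟨hz.1, hzc⟩
            · exact Or.inr ⟨hzc, hz.2.trans_le hx.2⟩
      _ = (∫ z in Icc a c, u z ∂μ) + F :=
          setIntegral_union ((Iic_disjoint_Ioi le_rfl).mono Icc_subset_Iic_self Ioo_subset_Ioi_self)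
            measurableSet_Ioo
            (hu_int.mono_set (Icc_subset_Icc_right hcb.le))
            (hu_int.mono_set fun x hx => hsub (Or.inr hx))
      _ = F := by rw [setIntegral_eq_zero_of_forall_eq_zero hc, zero_add]
  have hF : F ≤ 0 := by
    have hF0 : 0 ≤ F :=
      setIntegral_nonneg measurableSet_Ioo fun x hx => hu_nonneg x (hsub (Or.inr hx))
    have hμ : μ.real (Ioo c d) < 1 := ENNReal.toReal_lt_of_lt_ofReal (by simpa using hd1)
    have : F ≤ F * μ.real (Ioo c d) :=
      calc F ≤ ∫ _ in Ioo c d, F ∂μ := setIntegral_mono_on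
            (hu_int.mono_set fun x hx => hsub (Or.inr hx)) (integrableOn_const (measure_ne_top _ _))
            measurableSet_Ioo fun x hx => hle x (Ioo_subset_Ioc_self hx)
        _ = F * μ.real (Ioo c d) := by rw [setIntegral_const, smul_eq_mul, mul_comm]
    nlinarith
  refine ⟨d, hcd, hdb, fun z hz => ?_⟩
  rcases le_or_gt z c with hzc | hzc
  · exact hc z ⟨hz.1, hzc⟩
  · exact le_antisymm ((hle z ⟨hzc, hz.2⟩).trans hF) (hu_nonneg z ⟨hz.1, hz.2.trans hdb⟩)

theorem eqOn_zero_of_le_setIntegral_Ico (hu_int : IntegrableOn u (Icc a b) μ)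
    (hu_nonneg : ∀ x ∈ Icc a b, 0 ≤ u x) (ha : u a = 0)
    (h : ∀ y ∈ Ioc a b, u y ≤ ∫ x in Ico a y, u x ∂μ) : ∀ x ∈ Icc a b, u x = 0 := by
  by_contra! hbad
  obtain ⟨x₀, hx₀, hux₀⟩ := hbad
  set B := {x ∈ Icc a b | u x ≠ 0}
  have hBbdd : BddBelow B := ⟨a, fun x hx => hx.1.1⟩
  set c := sInf B
  have hac : a ≤ c := le_csInf ⟨x₀, hx₀, hux₀⟩ fun x hx => hx.1.1
  have hcx₀ : c ≤ x₀ := csInf_le hBbdd ⟨hx₀, hux₀⟩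
  have hbelow : ∀ z ∈ Icc a b, z < c → u z = 0 := fun z hz hzc => by
    by_contra hne
    exact (csInf_le hBbdd ⟨hz, hne⟩).not_gt hzc
  have huc : u c = 0 := by
    rcases hac.eq_or_lt with hac' | hac'
    · exact hac' ▸ ha
    · refine le_antisymm ((h c ⟨hac', hcx₀.trans hx₀.2⟩).trans_eq
        (setIntegral_eq_zero_of_forall_eq_zero fun z hz =>
          hbelow z ⟨hz.1, hz.2.le.trans (hcx₀.trans hx₀.2)⟩ hz.2))
        (hu_nonneg c ⟨hac, hcx₀.trans hx₀.2⟩)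
  have hcb : c < b := by
    refine (hcx₀.trans hx₀.2).lt_of_ne fun hcb => hux₀ ?_
    rw [le_antisymm (hcb ▸ hx₀.2) hcx₀, huc]
  obtain ⟨d, hcd, -, hd⟩ := exists_gt_forall_eq_zero_of_le_setIntegral_Ico hu_int hu_nonneg h
    hac hcb fun z hz => hz.2.eq_or_lt.elim (· ▸ huc) (hbelow z ⟨hz.1, hz.2.trans hcb.le⟩)
  have : d ≤ c := le_csInf ⟨x₀, hx₀, hux₀⟩ fun x hx =>
    le_of_not_gt fun hxd => hx.2 (hd x ⟨hx.1.1, hxd.le⟩)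
  linarith

end Gronwall

lemma BoundedVariationOn.integrableOn_Icc {g : ℝ → ℝ} {a b : ℝ} {μ : Measure ℝ}
    [IsLocallyFiniteMeasure μ] (hg : BoundedVariationOn g (Icc a b)) :
    IntegrableOn g (Icc a b) μ := by
  rcases lt_or_ge b a with hba | hab
  · simp [Icc_eq_empty_of_lt hba]
  have : IsFiniteMeasure (μ.restrict (Icc a b)) := isFiniteMeasure_restrict.2 measure_Icc_lt_top.ne
  obtain ⟨p, q, hp, hq, hpq⟩ := hg.locallyBoundedVariationOn.exists_monotoneOn_sub_monotoneOn
  have hmeas : AEMeasurable g (μ.restrict (Icc a b)) := hpq ▸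
    (aemeasurable_restrict_of_monotoneOn measurableSet_Icc hp).sub
      (aemeasurable_restrict_of_monotoneOn measurableSet_Icc hq)
  exact Integrable.of_bound hmeas.aestronglyMeasurable _ ((ae_restrict_iff' measurableSet_Icc).2
    (Eventually.of_forall fun x hx => hg.abs_le_abs_add (left_mem_Icc.2 hab) hx))

section Density

variable {X : Type*} [MeasurableSpace X] {ν : Measure X} {f : X → ℝ}

lemma setIntegral_withDensity_ofReal_inv_mul {g : X → ℝ} {s : Set X} (hs : MeasurableSet s)
    (hf : AEMeasurable f (ν.restrict s)) (hf_pos : ∀ x ∈ s, 0 < f x) :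
    ∫ x in s, f x * g x ∂(ν.withDensity fun x => ENNReal.ofReal (f x)⁻¹)
      = ∫ x in s, g x ∂ν := by
  rw [setIntegral_withDensity_eq_setIntegral_toReal_smul₀ (f := fun x => ENNReal.ofReal (f x)⁻¹)
    hf.inv.ennreal_ofReal (Eventually.of_forall fun _ => ENNReal.ofReal_lt_top) _ hs]
  refine setIntegral_congr_fun hs fun x hx => ?_
  rw [smul_eq_mul, ENNReal.toReal_ofReal (inv_nonneg.2 (hf_pos x hx).le),
    inv_mul_cancel_left₀ (hf_pos x hx).ne']

lemma isFiniteMeasure_withDensity_ofReal_inv [IsFiniteMeasure ν] {s : Set X} {m : ℝ}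
    (hs : ν sᶜ = 0) (hm : 0 < m) (hf : ∀ x ∈ s, m ≤ f x) :
    IsFiniteMeasure (ν.withDensity fun x => ENNReal.ofReal (f x)⁻¹) := by
  refine isFiniteMeasure_withDensity (ne_top_of_le_ne_top
    (ENNReal.mul_ne_top (ENNReal.ofReal_ne_top (r := m⁻¹)) (measure_ne_top ν univ)) ?_)
  rw [← lintegral_const]
  refine lintegral_mono_ae ?_
  filter_upwards [measure_eq_zero_iff_ae_notMem.1 hs] with x hx
  exact ENNReal.ofReal_le_ofReal (inv_anti₀ hm (hf x (not_not.1 hx)))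

end Density

theorem mul_le_setIntegral_withDensity_inv_of_RSIntegral_nonpos {f g : ℝ → ℝ} {a b y : ℝ}
    {ν : Measure ℝ} [IsLocallyFiniteMeasure ν] (hf_cont : ContinuousOn f (Icc a b))
    (hf_pos : ∀ x ∈ Icc a b, 0 < f x) (hf_bv : BoundedVariationOn f (Icc a b))
    (hg_nonneg : ∀ x ∈ Icc a b, 0 ≤ g x) (hg_bv : BoundedVariationOn g (Icc a b)) (hga : g a = 0)
    (hν : IsVariationMeasureOn f a b ν) (hy : y ∈ Ioc a b) (h_neg : RSIntegral f g a y ≤ 0) :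
    f y * g y ≤ ∫ x in Ico a y, f x * g x ∂(ν.withDensity fun x => ENNReal.ofReal (f x)⁻¹) := by
  obtain ⟨hay, hyb⟩ := hy
  have hsub : Icc a y ⊆ Icc a b := Icc_subset_Icc_right hyb
  obtain ⟨I, hI⟩ := (hg_bv.mono hsub).exists_hasRSIntegral hay.le (hf_cont.mono hsub)
  have hI0 : I ≤ 0 := hI.RSIntegral_eq hay ▸ h_neg
  have hlow := hI.mul_sub_mul_sub_le_setIntegral hay (hg_bv.mono hsub)
    (fun x hx => hg_nonneg x (hsub hx))
    (fun x hx => hν.measure_singleton_eq_zero hf_cont hf_bv ⟨hx.1, hx.2.trans_le hyb⟩)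
    fun c d hac hcd hdy => hν.sub_le_measureReal_Ico hf_bv hac hcd (hdy.trans hyb)
  rw [setIntegral_withDensity_ofReal_inv_mul measurableSet_Ico
    ((hf_cont.mono (Ico_subset_Icc_self.trans hsub)).aemeasurable measurableSet_Ico)
    fun x hx => hf_pos x (hsub (Ico_subset_Icc_self hx))]
  rw [hga, mul_zero, sub_zero] at hlow
  linarith

/-- core of the proof of Theorem 3: if `∫_a^y f dg ≤ 0` for all `y ∈ (a,b]`,
then `f y · g y ≤ ∫_{[a,y)} f g dμ` for all `y ∈ (a,b]` (where `μ = f⁻¹ · ν` and `ν` is the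
variation measure of `f`), and consequently `g` vanishes identically on `[a, b]`. -/
theorem stmt_19 (a b : ℝ) (hab : a ≤ b) (f g : ℝ → ℝ)
    (hf_cont : ContinuousOn f (Set.Icc a b))
    (hf_pos : ∀ x ∈ Set.Icc a b, 0 < f x)
    (hf_bv : BoundedVariationOn f (Set.Icc a b))
    (hg_nonneg : ∀ x ∈ Set.Icc a b, 0 ≤ g x)
    (hg_bv : BoundedVariationOn g (Set.Icc a b))
    (hga : g a = 0)
    (ν : MeasureTheory.Measure ℝ) [MeasureTheory.IsFiniteMeasure ν]
    (hν_supp : ν (Set.Icc a b)ᶜ = 0)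
    (hν : ∀ c d : ℝ, a ≤ c → c < d → d ≤ b →
      ν (Set.Ico c d) = ENNReal.ofReal (eVariationOn f (Set.Icc c d)).toReal)
    (μ : MeasureTheory.Measure ℝ)
    (hμ : μ = ν.withDensity fun x => ENNReal.ofReal (f x)⁻¹)
    (h_neg : ∀ y ∈ Set.Ioc a b, RSIntegral f g a y ≤ 0) :
    (∀ y ∈ Set.Ioc a b, f y * g y ≤ ∫ x in Set.Ico a y, f x * g x ∂μ) ∧
      ∀ x ∈ Set.Icc a b, g x = 0 := by
  have key : ∀ y ∈ Ioc a b, f y * g y ≤ ∫ x in Ico a y, f x * g x ∂μ := fun y hy =>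
    hμ ▸ mul_le_setIntegral_withDensity_inv_of_RSIntegral_nonpos hf_cont hf_pos hf_bv hg_nonneg
      hg_bv hga hν hy (h_neg y hy)
  refine ⟨key, fun x hx => ?_⟩
  obtain ⟨x₀, hx₀, hmin⟩ := isCompact_Icc.exists_isMinOn (nonempty_Icc.2 hab) hf_cont
  have : IsFiniteMeasure μ :=
    hμ ▸ isFiniteMeasure_withDensity_ofReal_inv hν_supp (hf_pos x₀ hx₀) fun x hx => hmin hx
  have hfg := eqOn_zero_of_le_setIntegral_Ico (u := fun x => f x * g x)
    (hg_bv.integrableOn_Icc.continuousOn_mul hf_cont isCompact_Icc)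
    (fun x hx => mul_nonneg (hf_pos x hx).le (hg_nonneg x hx)) (by simp [hga]) key x hx
  exact (mul_eq_zero.1 hfg).resolve_left (hf_pos x hx).ne'
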